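/- arXiv:1610.10022 — 10 statements merged into one kernel-verified Lean document; each statement's English description precedes it below -/
import Mathlib

section
/- A vector x* is an optimal solution of (P_δ) if and only if there exists y* ∈ ℝ^m with −Aᵀy* ∈ Sign(x*) and Ax* − b ∈ δ·Sign(y*), where Sign(x) := {ξ ∈ [−1,1]^n : x_j ≠ 0 ⇒ ξ_j = sign(x_j)} is the subdifferential of the ℓ₁-norm at x. -/
open Finset Pointwise

noncomputable def l1 {n : ℕ} (x : Fin n → ℝ) : ℝ := ∑ j, |x j|

noncomputable def linf {m : ℕ} (x : Fin m → ℝ) : ℝ := ⨆ i, |x i|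

def SignSet {n : ℕ} (x : Fin n → ℝ) : Set (Fin n → ℝ) :=
  {ξ | (∀ j, |ξ j| ≤ 1) ∧ ∀ j, x j ≠ 0 → ξ j = Real.sign (x j)}

def Feas {m n : ℕ} (A : Matrix (Fin m) (Fin n) ℝ) (b : Fin m → ℝ) (δ : ℝ)
    (x : Fin n → ℝ) : Prop := linf (A.mulVec x - b) ≤ δ

def IsOpt {m n : ℕ} (A : Matrix (Fin m) (Fin n) ℝ) (b : Fin m → ℝ) (δ : ℝ)
    (x : Fin n → ℝ) : Prop := Feas A b δ x ∧ ∀ z, Feas A b δ z → l1 x ≤ l1 z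

def DualCert {m n : ℕ} (A : Matrix (Fin m) (Fin n) ℝ) (b : Fin m → ℝ) (δ : ℝ)
    (x : Fin n → ℝ) (y : Fin m → ℝ) : Prop :=
  (-(A.transpose.mulVec y) ∈ SignSet x) ∧ (A.mulVec x - b ∈ δ • SignSet y)

/-
Sufficiency is weak duality: with `ξ = -Aᵀy`, every feasible `z` satisfies
`‖z‖₁ ≥ ξ ⬝ z = -y ⬝ (Az - b) - y ⬝ b ≥ -δ‖y‖₁ - y ⬝ b`, and the two sign conditions turn both
inequalities into equalities at `x`.

Necessity: `(P_δ)` is the linear program `min ∑ t` subject to `± z_j ≤ t_j`, `± (Az - b)_i ≤ δ`,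
solved by `(z, t) = (x, |x|)`. Its KKT multipliers `α, β ≥ 0` (for `± z_j ≤ t_j`) and `P, Q ≥ 0`
(for `± (Az - b)_i ≤ δ`) satisfy `α - β = -Aᵀ(P - Q)` and `α + β = 1`, and complementary
slackness makes `y = P - Q` a dual certificate. The multipliers come from Farkas' lemma, which
rests on the closedness of finitely generated cones.
-/

open Set Filter Topology Matrix
open scoped InnerProductSpace

theorem exists_mul_le_of_exists_pos {ι : Type*} [Fintype ι] {l c : ι → ℝ} (hl : 0 ≤ l)
    (hc : ∃ i, 0 < c i) : ∃ t, ∃ j, (∀ i, t * c i ≤ l i) ∧ t * c j = l j := by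
  obtain ⟨j, hj, hmin⟩ := Finset.exists_min_image {i | 0 < c i} (fun i => l i / c i)
    (by simpa [Finset.Nonempty] using hc)
  rw [Finset.mem_filter_univ] at hj
  refine ⟨l j / c j, j, fun i => ?_, div_mul_cancel₀ _ hj.ne'⟩
  rcases lt_or_ge 0 (c i) with hi | hi
  · simpa [le_div_iff₀ hi] using hmin i ((Finset.mem_filter_univ i).2 hi)
  · exact (mul_nonpos_of_nonneg_of_nonpos (div_nonneg (hl j) hj.le) hi).trans (hl i)

namespace PointedCone

variable {ι E : Type*} [Fintype ι]

section Module

variable [AddCommGroup E] [Module ℝ E]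

theorem mem_hull_range_iff {v : ι → E} {x : E} :
    x ∈ hull ℝ (Set.range v) ↔ ∃ l : ι → ℝ, 0 ≤ l ∧ ∑ i, l i • v i = x := by
  rw [Submodule.mem_span_range_iff_exists_fun]
  constructor
  · rintro ⟨c, rfl⟩
    exact ⟨fun i => c i, fun i => (c i).2, by simp [Nonneg.coe_smul]⟩
  · rintro ⟨l, hl, rfl⟩
    exact ⟨fun i => ⟨l i, hl i⟩, by simp [← Nonneg.coe_smul]⟩

theorem exists_mem_hull_range_ne_of_not_linearIndependent {v : ι → E}
    (hv : ¬LinearIndependent ℝ v) {x : E} (hx : x ∈ hull ℝ (Set.range v)) :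
    ∃ j, x ∈ hull ℝ (Set.range fun i : {i // i ≠ j} => v i.1) := by
  classical
  obtain ⟨l, hl, rfl⟩ := mem_hull_range_iff.1 hx
  obtain ⟨c, hc, hpos⟩ : ∃ c : ι → ℝ, ∑ i, c i • v i = 0 ∧ ∃ i, 0 < c i := by
    obtain ⟨c, hc, i, hi⟩ := Fintype.not_linearIndependent_iff.1 hv
    rcases hi.lt_or_gt with hi | hi
    · exact ⟨-c, by simp [hc], i, by simpa using hi⟩
    · exact ⟨c, hc, i, hi⟩
  obtain ⟨t, j, hle, heq⟩ := exists_mul_le_of_exists_pos hl hpos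
  -- subtracting `t • c` keeps the coefficients nonnegative and kills the `j`-th one
  refine ⟨j, mem_hull_range_iff.2 ⟨fun i => l i - t * c i, fun i => sub_nonneg.2 (hle i), ?_⟩⟩
  have hsum : ∑ i, (l i - t * c i) • v i = ∑ i, l i • v i := by
    simp [sub_smul, mul_smul, Finset.sum_sub_distrib, ← Finset.smul_sum, hc]
  rw [← hsum, Fintype.sum_eq_add_sum_subtype_ne _ j, heq, sub_self, zero_smul, zero_add]

variable [TopologicalSpace E] [IsTopologicalAddGroup E] [ContinuousSMul ℝ E] [T2Space E]

theorem isClosed_hull_range_of_linearIndependent {v : ι → E} (hv : LinearIndependent ℝ v) :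
    IsClosed (hull ℝ (Set.range v) : Set E) := by
  have hemb := LinearMap.isClosedEmbedding_of_injective (LinearMap.ker_eq_bot.2
    (linearIndependent_iff_injective_fintypeLinearCombination.1 hv))
  have himage : (hull ℝ (Set.range v) : Set E) = Fintype.linearCombination ℝ v '' Ici 0 := by
    ext x
    simp [mem_hull_range_iff, Fintype.linearCombination_apply]
  rw [himage]
  exact hemb.isClosedMap _ isClosed_Ici

/-- By conic Carathéodory, a finitely generated cone is a finite union of cones spanned by
linearly independent families. -/
theorem isClosed_hull_range (v : ι → E) : IsClosed (hull ℝ (Set.range v) : Set E) := by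
  classical
  induction h : Fintype.card ι using Nat.strong_induction_on generalizing ι with
  | _ k ih =>
    by_cases hv : LinearIndependent ℝ v
    · exact isClosed_hull_range_of_linearIndependent hv
    have hunion : (hull ℝ (Set.range v) : Set E) =
        ⋃ j, hull ℝ (Set.range fun i : {i // i ≠ j} => v i.1) :=
      Subset.antisymm
        (fun x hx => mem_iUnion.2 (exists_mem_hull_range_ne_of_not_linearIndependent hv hx))
        (iUnion_subset fun j =>
          Submodule.span_mono (range_subset_iff.2 fun i => mem_range_self i.1))
    rw [hunion]
    exact isClosed_iUnion_of_finite fun j =>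
      ih _ (h ▸ Fintype.card_subtype_lt (p := (· ≠ j)) (not_not.2 rfl)) _ rfl

end Module

theorem mem_hull_range_of_forall_inner_nonpos [NormedAddCommGroup E] [InnerProductSpace ℝ E]
    [CompleteSpace E] {v : ι → E} {c : E} (h : ∀ w, (∀ i, ⟪v i, w⟫_ℝ ≤ 0) → ⟪c, w⟫_ℝ ≤ 0) :
    c ∈ hull ℝ (Set.range v) := by
  by_contra hc
  obtain ⟨y, hy, hcy⟩ := ProperCone.hyperplane_separation'
    (⟨hull ℝ (Set.range v), isClosed_hull_range v⟩ : ProperCone ℝ E) hc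
  have := h (-y) fun i => by
    simpa [inner_neg_right] using hy (v i) (subset_hull (mem_range_self i))
  rw [inner_neg_right] at this
  linarith

end PointedCone

section LinearProgram

variable {ι E : Type*} [Fintype ι] [NormedAddCommGroup E] [InnerProductSpace ℝ E]
  {a : ι → E} {β : ι → ℝ} {x : E}

theorem eventually_add_smul_mem_polyhedron {w : E} (hx : ∀ q, ⟪a q, x⟫_ℝ ≤ β q)
    (hw : ∀ q, ⟪a q, x⟫_ℝ = β q → ⟪a q, w⟫_ℝ ≤ 0) :
    ∀ᶠ ε in 𝓝[>] (0 : ℝ), ∀ q, ⟪a q, x + ε • w⟫_ℝ ≤ β q := by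
  refine eventually_all.2 fun q => ?_
  rcases (hx q).eq_or_lt with hq | hq
  · filter_upwards [self_mem_nhdsWithin] with ε (hε : 0 < ε)
    rw [inner_add_right, real_inner_smul_right, hq]
    nlinarith [hw q hq]
  · have hcont : Continuous fun ε : ℝ => ⟪a q, x + ε • w⟫_ℝ := by fun_prop
    exact nhdsWithin_le_nhds <| (hcont.tendsto' 0 _ (by simp)).eventually (eventually_le_nhds hq)

theorem exists_lagrange_multipliers_of_isMinOn [CompleteSpace E] {c : E}
    (hx : ∀ q, ⟪a q, x⟫_ℝ ≤ β q)
    (hmin : IsMinOn (fun w => ⟪c, w⟫_ℝ) {w | ∀ q, ⟪a q, w⟫_ℝ ≤ β q} x) :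
    ∃ μ : ι → ℝ, (∀ q, 0 ≤ μ q) ∧ (∀ q, ⟪a q, x⟫_ℝ < β q → μ q = 0) ∧ ∑ q, μ q • a q = -c := by
  classical
  let v q := if ⟪a q, x⟫_ℝ = β q then a q else 0
  have hdir : ∀ w, (∀ q, ⟪v q, w⟫_ℝ ≤ 0) → ⟪-c, w⟫_ℝ ≤ 0 := by
    intro w hw
    obtain ⟨ε, hfeas, hε⟩ := ((eventually_add_smul_mem_polyhedron hx fun q hq => by
      simpa [v, hq] using hw q).and self_mem_nhdsWithin).exists
    have := isMinOn_iff.1 hmin _ hfeas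
    simp only [inner_add_right, real_inner_smul_right, le_add_iff_nonneg_right] at this
    rw [inner_neg_left, neg_nonpos]
    exact nonneg_of_mul_nonneg_right this hε
  obtain ⟨μ, hμ, hsum⟩ := PointedCone.mem_hull_range_iff.1
    (PointedCone.mem_hull_range_of_forall_inner_nonpos hdir)
  refine ⟨fun q => if ⟪a q, x⟫_ℝ = β q then μ q else 0, fun q => ?_, fun q hq => if_neg hq.ne, ?_⟩
  · dsimp only
    split_ifs
    exacts [hμ q, le_rfl]
  · rw [← hsum]
    refine Finset.sum_congr rfl fun q _ => ?_
    simp only [v]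
    split_ifs <;> simp

end LinearProgram

theorem Real.sign_mul_self_eq_abs (t : ℝ) : Real.sign t * t = |t| := by
  rcases lt_trichotomy t 0 with h | rfl | h
  · rw [Real.sign_of_neg h, abs_of_neg h, neg_one_mul]
  · simp
  · rw [Real.sign_of_pos h, abs_of_pos h, one_mul]

section SignSet

variable {m n : ℕ}

theorem abs_le_linf (v : Fin m → ℝ) (i : Fin m) : |v i| ≤ linf v :=
  le_ciSup (f := fun i => |v i|) (Set.finite_range _).bddAbove i

theorem linf_le_iff {v : Fin m → ℝ} {δ : ℝ} (hδ : 0 ≤ δ) : linf v ≤ δ ↔ ∀ i, |v i| ≤ δ := by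
  refine ⟨fun h i => (abs_le_linf v i).trans h, fun h => ?_⟩
  rcases isEmpty_or_nonempty (Fin m) with hm | hm
  · rwa [linf, Real.iSup_of_isEmpty]
  · exact ciSup_le h

theorem feas_iff {A : Matrix (Fin m) (Fin n) ℝ} {b : Fin m → ℝ} {δ : ℝ} (hδ : 0 ≤ δ)
    {z : Fin n → ℝ} : Feas A b δ z ↔ ∀ i, |(A *ᵥ z - b) i| ≤ δ :=
  linf_le_iff hδ

theorem dotProduct_le_mul_l1 {ξ : Fin n → ℝ} {c : ℝ} (hξ : ∀ j, |ξ j| ≤ c) (z : Fin n → ℝ) :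
    ξ ⬝ᵥ z ≤ c * l1 z := by
  rw [l1, Finset.mul_sum]
  refine Finset.sum_le_sum fun j _ => ?_
  calc ξ j * z j ≤ |ξ j| * |z j| := by rw [← abs_mul]; exact le_abs_self _
    _ ≤ c * |z j| := mul_le_mul_of_nonneg_right (hξ j) (abs_nonneg _)

theorem dotProduct_eq_l1_of_mem_signSet {x ξ : Fin n → ℝ} (hξ : ξ ∈ SignSet x) :
    ξ ⬝ᵥ x = l1 x := by
  refine Finset.sum_congr rfl fun j _ => ?_
  by_cases hx : x j = 0
  · simp [hx]
  · rw [hξ.2 j hx, Real.sign_mul_self_eq_abs]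

theorem sign_mem_signSet (x : Fin n → ℝ) : (fun j => Real.sign (x j)) ∈ SignSet x := by
  refine ⟨fun j => ?_, fun j _ => rfl⟩
  rcases Real.sign_apply_eq (x j) with h | h | h <;> simp [h]

theorem sub_mem_signSet {x α β : Fin n → ℝ} (hα : ∀ j, 0 ≤ α j) (hβ : ∀ j, 0 ≤ β j)
    (hsum : α + β = 1) (hpos : ∀ j, 0 < x j → β j = 0) (hneg : ∀ j, x j < 0 → α j = 0) :
    α - β ∈ SignSet x := by
  have hsum j : α j + β j = 1 := congrFun hsum j
  refine ⟨fun j => abs_le.2 ⟨?_, ?_⟩, fun j hj => ?_⟩ <;> rw [Pi.sub_apply]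
  · linarith [hα j, hsum j]
  · linarith [hβ j, hsum j]
  rcases hj.lt_or_gt with hj | hj
  · rw [Real.sign_of_neg hj, hneg j hj]
    linarith [hsum j, hneg j hj]
  · rw [Real.sign_of_pos hj, hpos j hj]
    linarith [hsum j, hpos j hj]

theorem mem_smul_signSet_sub {r P Q : Fin m → ℝ} {δ : ℝ} (hr : ∀ i, |r i| ≤ δ)
    (hP : ∀ i, 0 ≤ P i) (hQ : ∀ i, 0 ≤ Q i) (hPr : ∀ i, r i < δ → P i = 0)
    (hQr : ∀ i, -r i < δ → Q i = 0) : r ∈ δ • SignSet (P - Q) := by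
  by_cases hδ : δ = 0
  · subst hδ
    have hr0 : r = 0 := funext fun i => abs_nonpos_iff.1 (hr i)
    exact ⟨_, sign_mem_signSet _, by simp [hr0]⟩
  refine ⟨fun i => r i / δ, ⟨fun i => ?_, fun i hi => ?_⟩, funext fun i => mul_div_cancel₀ _ hδ⟩
  · rw [abs_div]
    exact div_le_one_of_le₀ ((hr i).trans (le_abs_self δ)) (abs_nonneg δ)
  have hri := abs_le.1 (hr i)
  rw [Pi.sub_apply] at hi ⊢
  show r i / δ = _
  rcases hi.lt_or_gt with hi | hi
  · have hact : ¬-r i < δ := fun h => by linarith [hP i, hQr i h]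
    rw [Real.sign_of_neg hi, show r i = -δ by linarith [not_lt.1 hact], neg_div, div_self hδ]
  · have hact : ¬r i < δ := fun h => by linarith [hQ i, hPr i h]
    rw [Real.sign_of_pos hi, show r i = δ by linarith [not_lt.1 hact], div_self hδ]

end SignSet

section Epigraph

variable {m n : ℕ} {A : Matrix (Fin m) (Fin n) ℝ} {b : Fin m → ℝ} {δ : ℝ}

/-- The point `(z, t)` of the epigraph program `min ∑ t` s.t. `± z_j ≤ t_j`, `± (Az - b)_i ≤ δ`,
with `z` on the `Sum.inl` and `t` on the `Sum.inr` coordinates. -/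
def epiPoint (z t : Fin n → ℝ) : EuclideanSpace ℝ (Fin n ⊕ Fin n) := WithLp.toLp 2 (Sum.elim z t)

theorem inner_epiPoint (u s z t : Fin n → ℝ) :
    ⟪epiPoint u s, epiPoint z t⟫_ℝ = u ⬝ᵥ z + s ⬝ᵥ t := by
  simp [epiPoint, EuclideanSpace.inner_toLp_toLp, sumElim_dotProduct_sumElim, dotProduct_comm]

theorem epiPoint_surjective :
    Function.Surjective fun p : (Fin n → ℝ) × (Fin n → ℝ) => epiPoint p.1 p.2 := by
  rintro ⟨w⟩
  exact ⟨(w ∘ Sum.inl, w ∘ Sum.inr), by simp [epiPoint]⟩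

/-- Constraint normals of the epigraph program, for `z_j - t_j ≤ 0`, `-z_j - t_j ≤ 0`,
`(Az)_i ≤ δ + b_i` and `-(Az)_i ≤ δ - b_i` in this order; `epiBound` holds the right-hand sides. -/
def epiNormal (A : Matrix (Fin m) (Fin n) ℝ) :
    (Fin n ⊕ Fin n) ⊕ (Fin m ⊕ Fin m) → EuclideanSpace ℝ (Fin n ⊕ Fin n) :=
  Sum.elim (Sum.elim (fun j => epiPoint (Pi.single j 1) (-Pi.single j 1))
      (fun j => epiPoint (-Pi.single j 1) (-Pi.single j 1)))
    (Sum.elim (fun i => epiPoint (A i) 0) (fun i => epiPoint (-A i) 0))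

def epiBound (b : Fin m → ℝ) (δ : ℝ) : (Fin n ⊕ Fin n) ⊕ (Fin m ⊕ Fin m) → ℝ :=
  Sum.elim (fun _ => 0) (Sum.elim (fun i => δ + b i) (fun i => δ - b i))

theorem inner_epiNormal (A : Matrix (Fin m) (Fin n) ℝ) (z t : Fin n → ℝ) :
    (fun q => ⟪epiNormal A q, epiPoint z t⟫_ℝ) =
      Sum.elim (Sum.elim (z - t) (-z - t)) (Sum.elim (A *ᵥ z) (-(A *ᵥ z))) := by
  funext q
  rcases q with (j | j) | (i | i) <;>
    simp [epiNormal, inner_epiPoint, mulVec, sub_eq_add_neg]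

theorem inner_epiNormal_le_epiBound_iff {z t : Fin n → ℝ} :
    (∀ q, ⟪epiNormal A q, epiPoint z t⟫_ℝ ≤ epiBound b δ q) ↔
      (∀ j, |z j| ≤ t j) ∧ ∀ i, |(A *ᵥ z - b) i| ≤ δ := by
  simp only [fun q => congrFun (inner_epiNormal A z t) q, Sum.forall, epiBound, Sum.elim_inl,
    Sum.elim_inr, Pi.sub_apply, Pi.neg_apply]
  constructor
  · rintro ⟨⟨h₁, h₂⟩, h₃, h₄⟩
    exact ⟨fun j => abs_le.2 ⟨by linarith [h₂ j], by linarith [h₁ j]⟩,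
      fun i => abs_le.2 ⟨by linarith [h₄ i], by linarith [h₃ i]⟩⟩
  · rintro ⟨h₁, h₂⟩
    exact ⟨⟨fun j => by linarith [abs_le.1 (h₁ j)], fun j => by linarith [abs_le.1 (h₁ j)]⟩,
      fun i => by linarith [abs_le.1 (h₂ i)], fun i => by linarith [abs_le.1 (h₂ i)]⟩

theorem isMinOn_epiPoint_of_isOpt (hδ : 0 ≤ δ) {x : Fin n → ℝ} (hx : IsOpt A b δ x) :
    IsMinOn (fun w => ⟪epiPoint 0 1, w⟫_ℝ)
      {w | ∀ q, ⟪epiNormal A q, w⟫_ℝ ≤ epiBound b δ q} (epiPoint x |x|) := by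
  refine isMinOn_iff.2 fun w hw => ?_
  obtain ⟨⟨z, t⟩, rfl⟩ := epiPoint_surjective w
  obtain ⟨hzt, hz⟩ := inner_epiNormal_le_epiBound_iff.1 hw
  simp only [inner_epiPoint, zero_dotProduct, zero_add, one_dotProduct]
  exact (hx.2 z ((feas_iff hδ).2 hz)).trans (Finset.sum_le_sum fun j _ => hzt j)

theorem sub_eq_neg_transpose_mulVec_of_sum_smul_epiNormal {α β : Fin n → ℝ} {P Q : Fin m → ℝ}
    (hsum : ∑ q, Sum.elim (Sum.elim α β) (Sum.elim P Q) q • epiNormal A q = -epiPoint 0 1) :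
    α - β = -(Aᵀ *ᵥ (P - Q)) ∧ α + β = 1 := by
  have hstat : ∀ z t, α ⬝ᵥ (z - t) + β ⬝ᵥ (-z - t) + (P ⬝ᵥ (A *ᵥ z) + Q ⬝ᵥ -(A *ᵥ z)) =
      -(1 ⬝ᵥ t) := by
    intro z t
    have := congrArg (⟪·, epiPoint z t⟫_ℝ) hsum
    simp only [sum_inner, real_inner_smul_left, inner_neg_left, inner_epiPoint, zero_dotProduct,
      zero_add] at this
    rwa [← sumElim_dotProduct_sumElim, ← sumElim_dotProduct_sumElim,
      ← sumElim_dotProduct_sumElim, ← inner_epiNormal]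
  refine ⟨dotProduct_eq _ _ fun z => ?_, dotProduct_eq _ _ fun t => ?_⟩
  · have := hstat z 0
    rw [mulVec_transpose, neg_dotProduct, ← dotProduct_mulVec]
    simp [sub_dotProduct, dotProduct_neg] at this ⊢
    linarith
  · have := hstat 0 t
    simp [dotProduct_neg, add_dotProduct] at this ⊢
    linarith

end Epigraph

section Duality

variable {m n : ℕ} {A : Matrix (Fin m) (Fin n) ℝ} {b : Fin m → ℝ} {δ : ℝ} {x : Fin n → ℝ}

theorem isOpt_of_dualCert (hδ : 0 ≤ δ) {y : Fin m → ℝ} (h : DualCert A b δ x y) :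
    IsOpt A b δ x := by
  obtain ⟨hξ, hr⟩ := h
  obtain ⟨η, hη, hr⟩ := Set.mem_smul_set.1 hr
  have hduality : ∀ z, -(Aᵀ *ᵥ y) ⬝ᵥ z = -((A *ᵥ z - b) ⬝ᵥ y) - b ⬝ᵥ y := fun z => by
    rw [neg_dotProduct, mulVec_transpose, ← dotProduct_mulVec, sub_dotProduct, dotProduct_comm y]
    ring
  have hfeas : ∀ i, |(A *ᵥ x - b) i| ≤ δ := fun i => by
    rw [← hr, Pi.smul_apply, smul_eq_mul, abs_mul, abs_of_nonneg hδ]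
    exact mul_le_of_le_one_right hδ (hη.1 i)
  refine ⟨(feas_iff hδ).2 hfeas, fun z hz => ?_⟩
  calc l1 x = -(Aᵀ *ᵥ y) ⬝ᵥ x := (dotProduct_eq_l1_of_mem_signSet hξ).symm
    _ = -(δ * l1 y) - b ⬝ᵥ y := by
      rw [hduality, ← hr, smul_dotProduct, dotProduct_eq_l1_of_mem_signSet hη, smul_eq_mul]
    _ ≤ -((A *ᵥ z - b) ⬝ᵥ y) - b ⬝ᵥ y := by
      linarith [dotProduct_le_mul_l1 ((feas_iff hδ).1 hz) y]
    _ = -(Aᵀ *ᵥ y) ⬝ᵥ z := (hduality z).symm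
    _ ≤ 1 * l1 z := dotProduct_le_mul_l1 hξ.1 z
    _ = l1 z := one_mul _

theorem exists_dualCert_of_isOpt (hδ : 0 ≤ δ) (hx : IsOpt A b δ x) :
    ∃ y, DualCert A b δ x y := by
  have hfeas := (feas_iff hδ).1 hx.1
  obtain ⟨μ, hμ, hslack, hsum⟩ := exists_lagrange_multipliers_of_isMinOn
    ((inner_epiNormal_le_epiBound_iff (t := |x|)).2 ⟨fun j => le_rfl, hfeas⟩)
    (isMinOn_epiPoint_of_isOpt hδ hx)
  obtain ⟨α, β, P, Q, rfl⟩ : ∃ α β P Q, μ = Sum.elim (Sum.elim α β) (Sum.elim P Q) :=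
    ⟨fun j => μ (.inl (.inl j)), fun j => μ (.inl (.inr j)), fun i => μ (.inr (.inl i)),
      fun i => μ (.inr (.inr i)), by ext ((j | j) | (i | i)) <;> rfl⟩
  obtain ⟨hξ, hαβ⟩ := sub_eq_neg_transpose_mulVec_of_sum_smul_epiNormal hsum
  have hval := congrFun (inner_epiNormal A x |x|)
  refine ⟨P - Q, hξ ▸ sub_mem_signSet (fun j => hμ (.inl (.inl j))) (fun j => hμ (.inl (.inr j)))
    hαβ (fun j hj => hslack (.inl (.inr j)) ?_) (fun j hj => hslack (.inl (.inl j)) ?_),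
    mem_smul_signSet_sub hfeas (fun i => hμ (.inr (.inl i))) (fun i => hμ (.inr (.inr i)))
    (fun i hi => hslack (.inr (.inl i)) ?_) (fun i hi => hslack (.inr (.inr i)) ?_)⟩
  all_goals simp only [hval, epiBound, Sum.elim_inl, Sum.elim_inr, Pi.sub_apply, Pi.neg_apply,
    Pi.abs_apply]
  · linarith [abs_of_pos hj]
  · linarith [abs_of_neg hj]
  · linarith [show (A *ᵥ x - b) i = (A *ᵥ x) i - b i from rfl]
  · linarith [show (A *ᵥ x - b) i = (A *ᵥ x) i - b i from rfl]

end Duality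

theorem optimality_iff_dual_certificate {m n : ℕ} (A : Matrix (Fin m) (Fin n) ℝ)
    (b : Fin m → ℝ) (δ : ℝ) (hδ : 0 ≤ δ) (x : Fin n → ℝ) :
    IsOpt A b δ x ↔ ∃ y : Fin m → ℝ, DualCert A b δ x y :=
  ⟨exists_dualCert_of_isOpt hδ, fun ⟨_, hy⟩ => isOpt_of_dualCert hδ hy⟩
end

section
/- If (x*, y*) satisfies −Aᵀy* ∈ Sign(x*) and Ax* − b ∈ δ·Sign(y*), then ‖x*‖₁ = −bᵀy* − δ‖y*‖₁, i.e., the primal and dual objective values coincide. -/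
open Finset Pointwise

theorem strong_duality_of_cert {m n : ℕ} (A : Matrix (Fin m) (Fin n) ℝ)
    (b : Fin m → ℝ) (δ : ℝ) (hδ : 0 ≤ δ) (x : Fin n → ℝ) (y : Fin m → ℝ)
    (h : DualCert A b δ x y) :
    l1 x = -(∑ i, b i * y i) - δ * l1 y := by
  obtain ⟨⟨hξ1, hξ2⟩, hmem⟩ := h
  obtain ⟨η, ⟨hη1, hη2⟩, hηeq⟩ := hmem
  have habs : ∀ (a c : ℝ), (a ≠ 0 → c = Real.sign a) → |a| = a * c := by
    intro a c hc
    by_cases ha : a = 0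
    · simp [ha]
    · rw [hc ha]
      rcases lt_or_gt_of_ne ha with h | h
      · rw [Real.sign_of_neg h, abs_of_neg h]; ring
      · rw [Real.sign_of_pos h, abs_of_pos h]; ring
  have hx : l1 x = ∑ j, x j * (-(A.transpose.mulVec y)) j := by
    unfold l1
    exact Finset.sum_congr rfl fun j _ => habs _ _ (hξ2 j)
  have hAx : ∀ i, A.mulVec x i = b i + δ * η i := by
    intro i
    have := congrFun hηeq i
    simp only [Pi.smul_apply, Pi.sub_apply, smul_eq_mul] at this
    linarith
  have key : ∑ j, x j * (-(A.transpose.mulVec y)) j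
      = -∑ i, (A.mulVec x i) * y i := by
    simp only [Pi.neg_apply, Matrix.mulVec, dotProduct, Matrix.transpose_apply,
      mul_neg, neg_mul, Finset.mul_sum, Finset.sum_mul, ← Finset.sum_neg_distrib]
    rw [Finset.sum_comm]
    exact Finset.sum_congr rfl fun i _ => Finset.sum_congr rfl fun j _ => by ring
  have hy : l1 y = ∑ i, y i * η i := by
    unfold l1
    exact Finset.sum_congr rfl fun i _ => habs _ _ (hη2 i)
  rw [hx, key, hy]
  simp only [hAx]
  rw [Finset.mul_sum]
  simp only [add_mul, Finset.sum_add_distrib, neg_add, sub_eq_add_neg]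
  congr 1
  rw [neg_inj]
  exact Finset.sum_congr rfl fun i _ => by ring
end

section
/- System (II) of the alternative (existence of d with A^{I_D}d = −sign(ŷ_{I_D}), sign(A^{I_P∖I_D}x̂ − b_{I_P∖I_D}) ⊙ A^{I_P∖I_D}d ≤ −𝟙, (A_{J_D∖J_P}ᵀŷ) ⊙ d_{J_D∖J_P} ≤ 0, d_{J_D^c} = 0) is feasible if and only if the primal update LP — maximize t over (x,t) with A^{I_D}x − b_{I_D} = (δ̂ − t)·sign(ŷ_{I_D}), (t − δ̂)𝟙 ≤ A^{I_D^c}x − b_{I_D^c} ≤ (δ̂ − t)𝟙, (Aᵀŷ) ⊙ x ≤ 0, x_{J_D^c} = 0, t ≤ δ̂ − δ — admits a feasible point with t > 0. -/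
open Finset Pointwise

/-!
Let `c = Aᵀ ŷ`. A solution `d` of (II) is a feasible direction of the update
LP at `(x̂, 0)`: along `x̂ + ε d` the residuals on `supp ŷ` shrink in modulus by exactly `ε`, the
other active residuals move inward at rate at least `1`, the inactive ones stay inside by
continuity, and `c ⊙ x ≤ 0` persists (on `supp x̂` because `x̂ + ε d` keeps the sign of `x̂`).
Hence `(x̂ + ε d, ε)` is feasible for small `ε > 0`. Conversely, a feasible `(x, t)` with `t > 0`
yields the solution `d = (x - x̂) / t` of (II).
-/

open Filter Topology
open scoped Matrix

namespace Real

lemma sign_mul_self_eq_abs_s8 (r : ℝ) : sign r * r = |r| := by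
  rcases lt_trichotomy r 0 with h | rfl | h
  · rw [sign_of_neg h, abs_of_neg h]; ring
  · simp
  · rw [sign_of_pos h, abs_of_pos h, one_mul]

lemma abs_sign_of_ne_zero {r : ℝ} (hr : r ≠ 0) : |sign r| = 1 := by
  rcases sign_apply_eq_of_ne_zero r hr with h | h <;> rw [h] <;> norm_num

lemma abs_sign_le_one (r : ℝ) : |sign r| ≤ 1 := by
  rcases sign_apply_eq r with h | h | h <;> rw [h] <;> norm_num

lemma sign_mul_le_abs (r s : ℝ) : sign r * s ≤ |s| :=
  calc sign r * s ≤ |sign r| * |s| := abs_mul (sign r) s ▸ le_abs_self _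
    _ ≤ |s| := mul_le_of_le_one_left (abs_nonneg s) (abs_sign_le_one r)

end Real

lemma eventually_sign_mul_add_mul_pos {a : ℝ} (ha : a ≠ 0) (e : ℝ) :
    ∀ᶠ ε in 𝓝 (0 : ℝ), 0 < Real.sign a * (a + ε * e) := by
  have h : Tendsto (fun ε : ℝ => Real.sign a * (a + ε * e)) (𝓝 0) (𝓝 |a|) :=
    Continuous.tendsto' (by fun_prop) 0 _ (by simp [Real.sign_mul_self_eq_abs_s8])
  exact h.eventually_const_lt (abs_pos.2 ha)

lemma eventually_abs_add_mul_le_sub {a e D : ℝ} (ha : |a| ≤ D)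
    (hbdry : |a| = D → Real.sign a * e ≤ -1) :
    ∀ᶠ ε in 𝓝[>] (0 : ℝ), |a + ε * e| ≤ D - ε := by
  rcases ha.lt_or_eq with hlt | heq
  · have h : Tendsto (fun ε : ℝ => |a + ε * e| + ε) (𝓝 0) (𝓝 |a|) :=
      Continuous.tendsto' (by fun_prop) 0 _ (by simp)
    filter_upwards [nhdsWithin_le_nhds (h.eventually (eventually_lt_nhds hlt))] with ε hε
    linarith
  · have hs := hbdry heq
    have ha0 : a ≠ 0 := by rintro rfl; simp at hs; linarith
    filter_upwards [self_mem_nhdsWithin,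
      nhdsWithin_le_nhds (eventually_sign_mul_add_mul_pos ha0 e)] with ε (hε : 0 < ε) hpos
    calc |a + ε * e| = |Real.sign a * (a + ε * e)| := by
          rw [abs_mul, Real.abs_sign_of_ne_zero ha0, one_mul]
      _ = |a| + ε * (Real.sign a * e) := by
          rw [abs_of_pos hpos, mul_add, Real.sign_mul_self_eq_abs_s8]; ring
      _ ≤ D - ε := by nlinarith

lemma sign_mul_inv_mul_sub_le_neg_one {r v D t : ℝ} (ht : 0 < t) (hr : |r| = D)
    (hv : |v| ≤ D - t) : Real.sign r * (t⁻¹ * (v - r)) ≤ -1 := by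
  have h : Real.sign r * (v - r) ≤ -t := by
    rw [mul_sub, Real.sign_mul_self_eq_abs_s8, hr]
    linarith [Real.sign_mul_le_abs r v]
  rw [mul_left_comm, inv_mul_le_iff₀ ht]
  linarith

section PrimalUpdate

variable {m n : ℕ}

def SystemII (A : Matrix (Fin m) (Fin n) ℝ) (b : Fin m → ℝ) (δhat : ℝ) (xhat : Fin n → ℝ)
    (yhat : Fin m → ℝ) (d : Fin n → ℝ) : Prop :=
  (∀ i, yhat i ≠ 0 → (A *ᵥ d) i = -Real.sign (yhat i)) ∧
  (∀ i, |(A *ᵥ xhat) i - b i| = δhat → yhat i = 0 →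
    Real.sign ((A *ᵥ xhat) i - b i) * (A *ᵥ d) i ≤ -1) ∧
  (∀ j, |∑ i, A i j * yhat i| = 1 → xhat j = 0 → (∑ i, A i j * yhat i) * d j ≤ 0) ∧
  (∀ j, |∑ i, A i j * yhat i| ≠ 1 → d j = 0)

def PrimalUpdateFeasible (A : Matrix (Fin m) (Fin n) ℝ) (b : Fin m → ℝ) (δ δhat : ℝ)
    (yhat : Fin m → ℝ) (x : Fin n → ℝ) (t : ℝ) : Prop :=
  (∀ i, yhat i ≠ 0 → (A *ᵥ x) i - b i = (δhat - t) * Real.sign (yhat i)) ∧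
  (∀ i, yhat i = 0 → t - δhat ≤ (A *ᵥ x) i - b i ∧ (A *ᵥ x) i - b i ≤ δhat - t) ∧
  (∀ j, (∑ i, A i j * yhat i) * x j ≤ 0) ∧
  (∀ j, |∑ i, A i j * yhat i| ≠ 1 → x j = 0) ∧
  t ≤ δhat - δ

variable {A : Matrix (Fin m) (Fin n) ℝ} {b : Fin m → ℝ} {δ δhat : ℝ}
  {xhat : Fin n → ℝ} {yhat : Fin m → ℝ}

namespace DualCert

lemma sum_mul_eq_neg_sign (hopt : DualCert A b δhat xhat yhat) {j : Fin n} (hj : xhat j ≠ 0) :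
    ∑ i, A i j * yhat i = -Real.sign (xhat j) :=
  neg_eq_iff_eq_neg.1 (hopt.1.2 j hj)

lemma eq_zero_of_abs_sum_mul_ne_one (hopt : DualCert A b δhat xhat yhat) {j : Fin n}
    (hj : |∑ i, A i j * yhat i| ≠ 1) : xhat j = 0 := by
  by_contra hx
  exact hj (by rw [hopt.sum_mul_eq_neg_sign hx, abs_neg, Real.abs_sign_of_ne_zero hx])

lemma residual_eq (hopt : DualCert A b δhat xhat yhat) {i : Fin m} (hi : yhat i ≠ 0) :
    (A *ᵥ xhat) i - b i = δhat * Real.sign (yhat i) := by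
  obtain ⟨ξ, hξ, hr⟩ := Set.mem_smul_set.1 hopt.2
  rw [← hξ.2 i hi]
  exact (congrFun hr i).symm

lemma abs_residual_le (hopt : DualCert A b δhat xhat yhat) (hδhat : 0 ≤ δhat) (i : Fin m) :
    |(A *ᵥ xhat) i - b i| ≤ δhat := by
  obtain ⟨ξ, hξ, hr⟩ := Set.mem_smul_set.1 hopt.2
  rw [← Pi.sub_apply, ← hr, Pi.smul_apply, smul_eq_mul, abs_mul, abs_of_nonneg hδhat]
  exact mul_le_of_le_one_right hδhat (hξ.1 i)

variable {d x : Fin n → ℝ} {t : ℝ}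

theorem eventually_primalUpdateFeasible_add_smul (hopt : DualCert A b δhat xhat yhat)
    (hδhat : 0 ≤ δhat) (hδ : δ < δhat) (hd : SystemII A b δhat xhat yhat d) :
    ∀ᶠ ε in 𝓝[>] (0 : ℝ), PrimalUpdateFeasible A b δ δhat yhat (xhat + ε • d) ε := by
  obtain ⟨hd_supp, hd_bdry, hd_col, hd_zero⟩ := hd
  have hbox : ∀ᶠ ε in 𝓝[>] (0 : ℝ), ∀ i, yhat i = 0 →
      |(A *ᵥ xhat) i - b i + ε * (A *ᵥ d) i| ≤ δhat - ε :=
    eventually_all.2 fun i => eventually_imp_distrib_left.2 fun hi =>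
      eventually_abs_add_mul_le_sub (hopt.abs_residual_le hδhat i) fun h => hd_bdry i h hi
  have hsign : ∀ᶠ ε in 𝓝[>] (0 : ℝ), ∀ j, xhat j ≠ 0 →
      0 < Real.sign (xhat j) * (xhat j + ε * d j) :=
    nhdsWithin_le_nhds <| eventually_all.2 fun j => eventually_imp_distrib_left.2 fun hj =>
      eventually_sign_mul_add_mul_pos hj (d j)
  have hstep : ∀ᶠ ε in 𝓝[>] (0 : ℝ), ε < δhat - δ :=
    nhdsWithin_le_nhds <| eventually_lt_nhds (sub_pos.2 hδ)
  filter_upwards [self_mem_nhdsWithin, hbox, hsign, hstep] with ε (hε : 0 < ε) hbox hsign hstep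
  have hres : ∀ i, (A *ᵥ (xhat + ε • d)) i - b i = (A *ᵥ xhat) i - b i + ε * (A *ᵥ d) i := by
    intro i
    simp only [Matrix.mulVec_add, Matrix.mulVec_smul, Pi.add_apply, Pi.smul_apply, smul_eq_mul]
    ring
  refine ⟨fun i hi => ?_, fun i hi => ?_, fun j => ?_, fun j hj => ?_, hstep.le⟩
  · rw [hres, hopt.residual_eq hi, hd_supp i hi]
    ring
  · rw [hres, ← neg_sub]
    exact abs_le.1 (hbox i hi)
  · simp only [Pi.add_apply, Pi.smul_apply, smul_eq_mul]
    by_cases hx : xhat j = 0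
    · by_cases hc : |∑ i, A i j * yhat i| = 1
      · rw [hx, zero_add, mul_left_comm]
        exact mul_nonpos_of_nonneg_of_nonpos hε.le (hd_col j hc hx)
      · simp [hx, hd_zero j hc]
    · rw [hopt.sum_mul_eq_neg_sign hx, neg_mul]
      exact neg_nonpos.2 (hsign j hx).le
  · simp [hopt.eq_zero_of_abs_sum_mul_ne_one hj, hd_zero j hj]

theorem systemII_inv_smul_sub (hopt : DualCert A b δhat xhat yhat) (ht : 0 < t)
    (hx : PrimalUpdateFeasible A b δ δhat yhat x t) :
    SystemII A b δhat xhat yhat (t⁻¹ • (x - xhat)) := by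
  obtain ⟨hx_supp, hx_box, hx_col, hx_zero, -⟩ := hx
  have hAd : ∀ i, (A *ᵥ (t⁻¹ • (x - xhat))) i =
      t⁻¹ * (((A *ᵥ x) i - b i) - ((A *ᵥ xhat) i - b i)) := by
    intro i
    simp only [Matrix.mulVec_smul, Matrix.mulVec_sub, Pi.smul_apply, Pi.sub_apply, smul_eq_mul]
    ring
  refine ⟨fun i hi => ?_, fun i hr hi => ?_, fun j _ hj => ?_, fun j hj => ?_⟩
  · rw [hAd, hx_supp i hi, hopt.residual_eq hi]
    field_simp
    ring
  · rw [hAd]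
    exact sign_mul_inv_mul_sub_le_neg_one ht hr (by rw [abs_le, neg_sub]; exact hx_box i hi)
  · simp only [Pi.smul_apply, Pi.sub_apply, hj, sub_zero, smul_eq_mul, mul_left_comm]
    exact mul_nonpos_of_nonneg_of_nonpos (inv_nonneg.2 ht.le) (hx_col j)
  · simp [hx_zero j hj, hopt.eq_zero_of_abs_sum_mul_ne_one hj]

end DualCert

end PrimalUpdate

theorem systemII_iff_primal_update_progress_general {m n : ℕ} (A : Matrix (Fin m) (Fin n) ℝ)
    (b : Fin m → ℝ) (δ δhat : ℝ) (hδ0 : 0 ≤ δ) (hδ : δ < δhat)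
    (xhat : Fin n → ℝ) (yhat : Fin m → ℝ) (hopt : DualCert A b δhat xhat yhat) :
    (∃ d : Fin n → ℝ,
        (∀ i, yhat i ≠ 0 → A.mulVec d i = -Real.sign (yhat i)) ∧
        (∀ i, |A.mulVec xhat i - b i| = δhat → yhat i = 0 →
          Real.sign (A.mulVec xhat i - b i) * A.mulVec d i ≤ -1) ∧
        (∀ j, |∑ i, A i j * yhat i| = 1 → xhat j = 0 →
          (∑ i, A i j * yhat i) * d j ≤ 0) ∧
        (∀ j, |∑ i, A i j * yhat i| ≠ 1 → d j = 0)) ↔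
    (∃ (x : Fin n → ℝ) (t : ℝ), 0 < t ∧
        (∀ i, yhat i ≠ 0 → A.mulVec x i - b i = (δhat - t) * Real.sign (yhat i)) ∧
        (∀ i, yhat i = 0 →
          t - δhat ≤ A.mulVec x i - b i ∧ A.mulVec x i - b i ≤ δhat - t) ∧
        (∀ j, (∑ i, A i j * yhat i) * x j ≤ 0) ∧
        (∀ j, |∑ i, A i j * yhat i| ≠ 1 → x j = 0) ∧
        t ≤ δhat - δ) := by
  constructor
  · rintro ⟨d, hd⟩
    obtain ⟨ε, hfeas, hε⟩ := ((hopt.eventually_primalUpdateFeasible_add_smul (hδ0.trans hδ.le)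
      hδ hd).and self_mem_nhdsWithin).exists
    exact ⟨xhat + ε • d, ε, hε, hfeas⟩
  · rintro ⟨x, t, ht, hfeas⟩
    exact ⟨t⁻¹ • (x - xhat), hopt.systemII_inv_smul_sub ht hfeas⟩

theorem systemII_iff_primal_update_progress {m n : ℕ} (A : Matrix (Fin m) (Fin n) ℝ)
    (b : Fin m → ℝ) (δ δhat : ℝ) (hδ0 : 0 ≤ δ) (hδ : δ < δhat) (hδb : δhat < linf b)
    (xhat : Fin n → ℝ) (yhat : Fin m → ℝ) (hopt : DualCert A b δhat xhat yhat) :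
    (∃ d : Fin n → ℝ,
        (∀ i, yhat i ≠ 0 → A.mulVec d i = -Real.sign (yhat i)) ∧
        (∀ i, |A.mulVec xhat i - b i| = δhat → yhat i = 0 →
          Real.sign (A.mulVec xhat i - b i) * A.mulVec d i ≤ -1) ∧
        (∀ j, |∑ i, A i j * yhat i| = 1 → xhat j = 0 →
          (∑ i, A i j * yhat i) * d j ≤ 0) ∧
        (∀ j, |∑ i, A i j * yhat i| ≠ 1 → d j = 0)) ↔
    (∃ (x : Fin n → ℝ) (t : ℝ), 0 < t ∧
        (∀ i, yhat i ≠ 0 → A.mulVec x i - b i = (δhat - t) * Real.sign (yhat i)) ∧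
        (∀ i, yhat i = 0 →
          t - δhat ≤ A.mulVec x i - b i ∧ A.mulVec x i - b i ≤ δhat - t) ∧
        (∀ j, (∑ i, A i j * yhat i) * x j ≤ 0) ∧
        (∀ j, |∑ i, A i j * yhat i| ≠ 1 → x j = 0) ∧
        t ≤ δhat - δ) :=
  systemII_iff_primal_update_progress_general A b δ δhat hδ0 hδ xhat yhat hopt
end

section
/- System (I) of the alternative (existence of e with −sign(Ax̂ − b)ᵀe < 0, A_{J_P}ᵀe = 0, (A_{J_D∖J_P}ᵀŷ) ⊙ (A_{J_D∖J_P}ᵀe) ≤ 0, −sign(A^{I_P∖I_D}x̂ − b_{I_P∖I_D}) ⊙ e_{I_P∖I_D} ≤ 0, e_{I_P^c} = 0) is feasible if and only if ŷ is not an optimal solution of the dual update LP: minimize −sign(Ax̂ − b)ᵀy over y ∈ ℝ^m subject to −A_{J_P}ᵀy = sign(x̂_{J_P}), −𝟙 ≤ A_{J_P^c}ᵀy ≤ 𝟙, −sign(Ax̂ − b) ⊙ y ≤ 0, and y_{I_P^c} = 0. -/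
open Finset Pointwise

lemma exists_pos_le_forall {k : ℕ} (f : Fin k → ℝ) (hf : ∀ a, 0 < f a) :
    ∃ t, 0 < t ∧ ∀ a, t ≤ f a := by
  rcases isEmpty_or_nonempty (Fin k) with h | h
  · exact ⟨1, one_pos, fun a => isEmptyElim a⟩
  · refine ⟨Finset.univ.inf' Finset.univ_nonempty f, ?_, fun a => Finset.inf'_le f (Finset.mem_univ a)⟩
    rw [Finset.lt_inf'_iff]
    exact fun a _ => hf a

lemma sum_affine {m : ℕ} (c a b : Fin m → ℝ) (t : ℝ) :
    ∑ i, c i * (a i + t * b i) = (∑ i, c i * a i) + t * ∑ i, c i * b i := by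
  rw [Finset.mul_sum, ← Finset.sum_add_distrib]
  exact Finset.sum_congr rfl fun i _ => by ring

lemma sum_sub' {m : ℕ} (c a b : Fin m → ℝ) :
    ∑ i, c i * (a i - b i) = (∑ i, c i * a i) - ∑ i, c i * b i := by
  rw [← Finset.sum_sub_distrib]
  exact Finset.sum_congr rfl fun i _ => by ring

lemma sign_abs_one {x : ℝ} (hx : x ≠ 0) : |Real.sign x| = 1 := by
  rcases hx.lt_or_gt with h | h
  · simp [Real.sign_of_neg h]
  · simp [Real.sign_of_pos h]

lemma sign_smul_pos {x : ℝ} (hx : x ≠ 0) {d : ℝ} (hd : 0 < d) :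
    Real.sign (d * Real.sign x) = Real.sign x := by
  rcases hx.lt_or_gt with h | h
  · rw [Real.sign_of_neg h]; rw [Real.sign_of_neg (by linarith)]
  · rw [Real.sign_of_pos h]; rw [Real.sign_of_pos (by linarith)]

lemma rsign_mul_self {x : ℝ} (hx : x ≠ 0) : Real.sign x * x = |x| := by
  rcases hx.lt_or_gt with h | h
  · rw [Real.sign_of_neg h, abs_of_neg h]; ring
  · rw [Real.sign_of_pos h, abs_of_pos h]; ring

theorem systemI_iff_dual_update_progress {m n : ℕ} (A : Matrix (Fin m) (Fin n) ℝ)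
    (b : Fin m → ℝ) (δhat : ℝ) (hδ0 : 0 ≤ δhat) (hδb : δhat < linf b)
    (xhat : Fin n → ℝ) (yhat : Fin m → ℝ) (hopt : DualCert A b δhat xhat yhat) :
    (∃ e : Fin m → ℝ,
        (∑ i, -Real.sign (A.mulVec xhat i - b i) * e i) < 0 ∧
        (∀ j, xhat j ≠ 0 → (∑ i, A i j * e i) = 0) ∧
        (∀ j, |∑ i, A i j * yhat i| = 1 → xhat j = 0 →
          (∑ i, A i j * yhat i) * (∑ i, A i j * e i) ≤ 0) ∧
        (∀ i, |A.mulVec xhat i - b i| = δhat → yhat i = 0 →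
          -Real.sign (A.mulVec xhat i - b i) * e i ≤ 0) ∧
        (∀ i, |A.mulVec xhat i - b i| ≠ δhat → e i = 0)) ↔
    (∃ y : Fin m → ℝ,
        ((∀ j, xhat j ≠ 0 → -(∑ i, A i j * y i) = Real.sign (xhat j)) ∧
         (∀ j, xhat j = 0 → |∑ i, A i j * y i| ≤ 1) ∧
         (∀ i, -Real.sign (A.mulVec xhat i - b i) * y i ≤ 0) ∧
         (∀ i, |A.mulVec xhat i - b i| ≠ δhat → y i = 0)) ∧
        (∑ i, -Real.sign (A.mulVec xhat i - b i) * y i) <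
          (∑ i, -Real.sign (A.mulVec xhat i - b i) * yhat i)) := by
  have hmv : ∀ (v : Fin m → ℝ) (j : Fin n), A.transpose.mulVec v j = ∑ i, A i j * v i := by
    intro v j
    simp [Matrix.mulVec, dotProduct, Matrix.transpose_apply]
  obtain ⟨hS1, hS2⟩ := hopt.1
  have F1 : ∀ j, |∑ i, A i j * yhat i| ≤ 1 := by
    intro j
    have := hS1 j
    rwa [Pi.neg_apply, abs_neg, hmv] at this
  have F2 : ∀ j, xhat j ≠ 0 → -(∑ i, A i j * yhat i) = Real.sign (xhat j) := by
    intro j hj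
    have := hS2 j hj
    rwa [Pi.neg_apply, hmv] at this
  obtain ⟨ξ, ⟨hξ1, hξ2⟩, hξeq⟩ := hopt.2
  have F3 : ∀ i, yhat i ≠ 0 → A.mulVec xhat i - b i = δhat * Real.sign (yhat i) := by
    intro i hy
    have h' : δhat * ξ i = A.mulVec xhat i - b i := by
      have := congrFun hξeq i
      simpa using this
    rw [← h', hξ2 i hy]
  have F5 : ∀ i, |A.mulVec xhat i - b i| ≠ δhat → yhat i = 0 := by
    intro i h
    by_contra hy
    apply h
    rw [F3 i hy, abs_mul, abs_of_nonneg hδ0, sign_abs_one hy, mul_one]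
  constructor
  · rintro ⟨e, h1, h2, h3, h4, h5⟩
    -- product is negative whenever relevant
    have huw : ∀ j, (∑ i, A i j * e i) ≠ 0 → |∑ i, A i j * yhat i| = 1 →
        (∑ i, A i j * yhat i) * (∑ i, A i j * e i) < 0 := by
      intro j hw hu
      by_cases hx : xhat j = 0
      · rcases (h3 j hu hx).lt_or_eq with h | h
        · exact h
        · exfalso
          have hu0 : (∑ i, A i j * yhat i) ≠ 0 := by
            intro h0; rw [h0] at hu; simp at hu
          rcases mul_eq_zero.mp h with h' | h'
          · exact hu0 h'
          · exact hw h'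
      · exact absurd (h2 j hx) hw
    set f : Fin n → ℝ := fun j =>
      if hw : (∑ i, A i j * e i) = 0 then 1
      else if |∑ i, A i j * yhat i| = 1 then
        -2 * ((∑ i, A i j * yhat i) * (∑ i, A i j * e i)) / (∑ i, A i j * e i) ^ 2
      else (1 - |∑ i, A i j * yhat i|) / |∑ i, A i j * e i| with hf
    have hfpos : ∀ j, 0 < f j := by
      intro j
      simp only [hf]
      split_ifs with hw hu
      · exact one_pos
      · exact div_pos (by nlinarith [huw j hw hu]) (by positivity)
      · exact div_pos (by nlinarith [lt_of_le_of_ne (F1 j) hu]) (abs_pos.mpr hw)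
    set g : Fin m → ℝ := fun i =>
      if yhat i = 0 ∨ e i = 0 then 1 else |yhat i| / |e i| with hg
    have hgpos : ∀ i, 0 < g i := by
      intro i
      simp only [hg]
      split_ifs with h
      · exact one_pos
      · push_neg at h
        exact div_pos (abs_pos.mpr h.1) (abs_pos.mpr h.2)
    obtain ⟨t1, ht1, ht1le⟩ := exists_pos_le_forall f hfpos
    obtain ⟨t2, ht2, ht2le⟩ := exists_pos_le_forall g hgpos
    set t := min t1 t2 with htdef
    have ht : 0 < t := lt_min ht1 ht2
    refine ⟨fun i => yhat i + t * e i, ⟨?_, ?_, ?_, ?_⟩, ?_⟩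
    · -- equality constraints
      intro j hj
      show -(∑ i, A i j * (yhat i + t * e i)) = Real.sign (xhat j)
      rw [sum_affine (fun i => A i j) yhat e t, h2 j hj, mul_zero, add_zero]
      exact F2 j hj
    · -- inequality constraints |·| ≤ 1
      intro j hj
      show |∑ i, A i j * (yhat i + t * e i)| ≤ 1
      rw [sum_affine (fun i => A i j) yhat e t]
      by_cases hw : (∑ i, A i j * e i) = 0
      · rw [hw, mul_zero, add_zero]; exact F1 j
      · have htf : t ≤ f j := le_trans (min_le_left t1 t2) (ht1le j)
        by_cases hu : |∑ i, A i j * yhat i| = 1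
        · simp only [hf] at htf
          rw [dif_neg hw, if_pos hu] at htf
          have hle : t * (∑ i, A i j * e i) ^ 2 ≤
              -2 * ((∑ i, A i j * yhat i) * (∑ i, A i j * e i)) :=
            (le_div_iff₀ (by positivity)).mp htf
          have hu2 : (∑ i, A i j * yhat i) ^ 2 = 1 := by
            rw [← sq_abs, hu, one_pow]
          have hsq : ((∑ i, A i j * yhat i) + t * (∑ i, A i j * e i)) ^ 2 ≤ 1 := by
            nlinarith [mul_le_mul_of_nonneg_left hle ht.le]
          rw [abs_le]
          constructor <;> nlinarith [hsq]
        · simp only [hf] at htf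
          rw [dif_neg hw, if_neg hu] at htf
          have hlt : |∑ i, A i j * yhat i| < 1 := lt_of_le_of_ne (F1 j) hu
          have hle : t * |∑ i, A i j * e i| ≤ 1 - |∑ i, A i j * yhat i| :=
            (le_div_iff₀ (abs_pos.mpr hw)).mp htf
          calc |(∑ i, A i j * yhat i) + t * (∑ i, A i j * e i)|
              ≤ |∑ i, A i j * yhat i| + |t * (∑ i, A i j * e i)| := abs_add_le _ _
            _ ≤ 1 := by rw [abs_mul, abs_of_pos ht]; linarith
    · -- sign constraints
      intro i
      show -Real.sign (A.mulVec xhat i - b i) * (yhat i + t * e i) ≤ 0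
      by_cases hy : yhat i = 0
      · rw [hy, zero_add]
        by_cases hr : |A.mulVec xhat i - b i| = δhat
        · have := h4 i hr hy
          nlinarith [ht.le]
        · rw [h5 i hr, mul_zero, mul_zero]
      · by_cases hd : δhat = 0
        · have hr0 : A.mulVec xhat i - b i = 0 := by rw [F3 i hy, hd, zero_mul]
          rw [hr0, Real.sign_zero, neg_zero, zero_mul]
        · have hdpos : 0 < δhat := lt_of_le_of_ne hδ0 (Ne.symm hd)
          have hs : Real.sign (A.mulVec xhat i - b i) = Real.sign (yhat i) := by
            rw [F3 i hy]; exact sign_smul_pos hy hdpos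
          rw [hs]
          have hsy : Real.sign (yhat i) * yhat i = |yhat i| := rsign_mul_self hy
          have hsabs : |Real.sign (yhat i)| = 1 := sign_abs_one hy
          have hte : t * |e i| ≤ |yhat i| := by
            by_cases he : e i = 0
            · rw [he, abs_zero, mul_zero]; exact abs_nonneg _
            · have htg : t ≤ g i := le_trans (min_le_right t1 t2) (ht2le i)
              simp only [hg] at htg
              rw [if_neg (not_or.mpr ⟨hy, he⟩)] at htg
              exact (le_div_iff₀ (abs_pos.mpr he)).mp htg
          have hbnd : Real.sign (yhat i) * e i ≥ -|e i| := by
            have h1' : |Real.sign (yhat i) * e i| = |e i| := by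
              rw [abs_mul, hsabs, one_mul]
            have := neg_abs_le (Real.sign (yhat i) * e i)
            linarith [this, h1'.ge, h1'.le]
          nlinarith [ht.le, abs_nonneg (e i)]
    · -- support constraint
      intro i hi
      show yhat i + t * e i = 0
      rw [F5 i hi, h5 i hi, mul_zero, add_zero]
    · -- strict objective decrease
      show (∑ i, -Real.sign (A.mulVec xhat i - b i) * (yhat i + t * e i)) <
          ∑ i, -Real.sign (A.mulVec xhat i - b i) * yhat i
      rw [sum_affine (fun i => -Real.sign (A.mulVec xhat i - b i)) yhat e t]
      nlinarith [mul_neg_of_pos_of_neg ht h1]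
  · rintro ⟨y, ⟨g1, g2, g3, g4⟩, g5⟩
    refine ⟨fun i => y i - yhat i, ?_, ?_, ?_, ?_, ?_⟩
    · show (∑ i, -Real.sign (A.mulVec xhat i - b i) * (y i - yhat i)) < 0
      rw [sum_sub' (fun i => -Real.sign (A.mulVec xhat i - b i)) y yhat]
      linarith [g5]
    · intro j hj
      show (∑ i, A i j * (y i - yhat i)) = 0
      rw [sum_sub' (fun i => A i j) y yhat]
      have e1 := g1 j hj
      have e2 := F2 j hj
      linarith
    · intro j hu hx
      show (∑ i, A i j * yhat i) * (∑ i, A i j * (y i - yhat i)) ≤ 0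
      rw [sum_sub' (fun i => A i j) y yhat]
      have hv := g2 j hx
      have hu2 : (∑ i, A i j * yhat i) ^ 2 = 1 := by rw [← sq_abs, hu, one_pow]
      have huv : (∑ i, A i j * yhat i) * (∑ i, A i j * y i) ≤ 1 := by
        calc (∑ i, A i j * yhat i) * (∑ i, A i j * y i)
            ≤ |(∑ i, A i j * yhat i) * (∑ i, A i j * y i)| := le_abs_self _
          _ = |∑ i, A i j * yhat i| * |∑ i, A i j * y i| := abs_mul _ _
          _ ≤ 1 := by rw [hu]; simpa using hv
      nlinarith
    · intro i hr hy
      show -Real.sign (A.mulVec xhat i - b i) * (y i - yhat i) ≤ 0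
      rw [hy, sub_zero]
      exact g3 i
    · intro i hi
      show y i - yhat i = 0
      rw [g4 i hi, F5 i hi, sub_zero]
end

section
/- If there exists d satisfying system (II) (A^{I_D}d = −sign(ŷ_{I_D}), sign(A^{I_P∖I_D}x̂ − b_{I_P∖I_D}) ⊙ A^{I_P∖I_D}d ≤ −𝟙, (A_{J_D∖J_P}ᵀŷ) ⊙ d_{J_D∖J_P} ≤ 0, d_{J_D^c} = 0), then there exists t₀ > 0 such that for all 0 ≤ t ≤ t₀ the point x̂ + t·d is an optimal solution of (P_{δ̂ − t}), with ŷ remaining a dual certificate. -/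
open Finset Pointwise

theorem systemII_gives_solution_path_segment {m n : ℕ} (A : Matrix (Fin m) (Fin n) ℝ)
    (b : Fin m → ℝ) (δhat : ℝ) (hδ0 : 0 < δhat) (hδb : δhat < linf b)
    (xhat : Fin n → ℝ) (yhat : Fin m → ℝ) (hopt : DualCert A b δhat xhat yhat)
    (d : Fin n → ℝ)
    (hd1 : ∀ i, yhat i ≠ 0 → A.mulVec d i = -Real.sign (yhat i))
    (hd2 : ∀ i, |A.mulVec xhat i - b i| = δhat → yhat i = 0 →
      Real.sign (A.mulVec xhat i - b i) * A.mulVec d i ≤ -1)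
    (hd3 : ∀ j, |∑ i, A i j * yhat i| = 1 → xhat j = 0 →
      (∑ i, A i j * yhat i) * d j ≤ 0)
    (hd4 : ∀ j, |∑ i, A i j * yhat i| ≠ 1 → d j = 0) :
    ∃ t₀ > (0 : ℝ), ∀ t : ℝ, 0 ≤ t → t ≤ t₀ →
      DualCert A b (δhat - t) (xhat + t • d) yhat := by
  obtain ⟨⟨h1a, h1b⟩, h2⟩ := hopt
  obtain ⟨ξ, ⟨hξ1, hξ2⟩, hξeq⟩ := Set.mem_smul_set.mp h2
  set r : Fin m → ℝ := A.mulVec xhat - b with hr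
  set g : Fin m → ℝ := A.mulVec d with hg
  have hre : ∀ i, r i = δhat * ξ i := by
    intro i; rw [← hξeq]; rfl
  have hrle : ∀ i, |r i| ≤ δhat := by
    intro i; rw [hre i, abs_mul, abs_of_pos hδ0]
    nlinarith [hξ1 i, abs_nonneg (ξ i)]
  set c : Fin m → ℝ := fun i =>
    if |r i| = δhat then 2*δhat/(1+|g i|) else (δhat - |r i|)/(1+|g i|) with hc
  set e : Fin n → ℝ := fun j => if xhat j = 0 then δhat else |xhat j|/(|d j|+1) with he
  have hcpos : ∀ i, 0 < c i := by
    intro i; simp only [hc]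
    split
    · positivity
    · have h1 := hrle i
      have h' : |r i| < δhat := lt_of_le_of_ne h1 ‹_›
      have h2 : (0:ℝ) < 1 + |g i| := by positivity
      exact div_pos (by linarith) h2
  have hepos : ∀ j, 0 < e j := by
    intro j; simp only [he]; split
    · exact hδ0
    · have h2 : (0:ℝ) < |d j| + 1 := by positivity
      exact div_pos (abs_pos.mpr ‹_›) h2
  set S : Finset ℝ := insert (δhat/2) ((Finset.univ.image c) ∪ (Finset.univ.image e))
    with hS
  have hSne : S.Nonempty := ⟨δhat/2, Finset.mem_insert_self _ _⟩
  refine ⟨S.min' hSne, ?_, ?_⟩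
  · rw [gt_iff_lt, Finset.lt_min'_iff]
    intro y hy
    simp only [hS, Finset.mem_insert, Finset.mem_union, Finset.mem_image] at hy
    rcases hy with h | ⟨i, _, rfl⟩ | ⟨j, _, rfl⟩
    · subst h; linarith
    · exact hcpos i
    · exact hepos j
  · intro t ht0 ht
    have htδ2 : t ≤ δhat/2 := le_trans ht (Finset.min'_le _ _ (by simp [hS]))
    have htc : ∀ i, t ≤ c i := fun i => le_trans ht (Finset.min'_le _ _ (by
      simp only [hS, Finset.mem_insert, Finset.mem_union, Finset.mem_image]
      exact Or.inr (Or.inl ⟨i, Finset.mem_univ i, rfl⟩)))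
    have hte : ∀ j, t ≤ e j := fun j => le_trans ht (Finset.min'_le _ _ (by
      simp only [hS, Finset.mem_insert, Finset.mem_union, Finset.mem_image]
      exact Or.inr (Or.inr ⟨j, Finset.mem_univ j, rfl⟩)))
    have hδt : 0 < δhat - t := by linarith
    constructor
    · constructor
      · exact h1a
      · intro j hj
        by_cases hx : xhat j = 0
        · have hdj : d j ≠ 0 := by
            intro h; apply hj; simp [hx, h]
          have ht' : 0 < t := by
            rcases ht0.lt_or_eq with h | h
            · exact h
            · exfalso; apply hj; simp [hx, ← h]
          have hA1 : |∑ i, A i j * yhat i| = 1 := by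
            by_contra h; exact hdj (hd4 j h)
          have hA2 := hd3 j hA1 hx
          have hAt : A.transpose.mulVec yhat j = ∑ i, A i j * yhat i := by
            simp [Matrix.mulVec, dotProduct, Matrix.transpose_apply]
          have hval : (xhat + t • d) j = t * d j := by simp [hx]
          rw [hval]
          simp only [Pi.neg_apply, hAt]
          rcases (abs_eq (by norm_num : (0:ℝ) ≤ 1)).mp hA1 with h | h
          · rw [h] at hA2 ⊢
            have hdn : d j < 0 := lt_of_le_of_ne (by linarith) hdj
            rw [Real.sign_of_neg (by nlinarith)]
          · rw [h] at hA2 ⊢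
            have hdn : 0 < d j := lt_of_le_of_ne (by linarith) (Ne.symm hdj)
            rw [Real.sign_of_pos (by nlinarith)]
            norm_num
        · have hcj := h1b j hx
          have htj : t * |d j| < |xhat j| := by
            have h1 := hte j
            simp only [he, if_neg hx] at h1
            have hpos : (0:ℝ) < |d j| + 1 := by positivity
            rw [le_div_iff₀ hpos] at h1
            have hxpos : 0 < |xhat j| := abs_pos.mpr hx
            rcases ht0.lt_or_eq with h | h
            · nlinarith
            · rw [← h, zero_mul]; exact hxpos
          have hval : (xhat + t • d) j = xhat j + t * d j := by simp
          rw [hval]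
          have habs1 := le_abs_self (d j)
          have habs2 := neg_abs_le (d j)
          rcases lt_or_gt_of_ne hx with h | h
          · rw [abs_of_neg h] at htj
            rw [Real.sign_of_neg (by nlinarith)]
            rw [Real.sign_of_neg h] at hcj
            exact hcj
          · rw [abs_of_pos h] at htj
            rw [Real.sign_of_pos (by nlinarith)]
            rw [Real.sign_of_pos h] at hcj
            exact hcj
    · refine Set.mem_smul_set.mpr ⟨fun i =>
        if yhat i = 0 then (r i + t * g i)/(δhat - t) else Real.sign (yhat i),
        ⟨?_, ?_⟩, ?_⟩
      · intro i
        by_cases hy : yhat i = 0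
        · simp only [if_pos hy]
          rw [abs_div, abs_of_pos hδt, div_le_one hδt]
          have hgabs1 := le_abs_self (g i)
          have hgabs2 := neg_abs_le (g i)
          by_cases hri : |r i| = δhat
          · have hkey : (r i).sign * g i ≤ -1 := hd2 i hri hy
            have htc' := htc i
            simp only [hc, if_pos hri] at htc'
            have hgpos : (0:ℝ) < 1 + |g i| := by positivity
            rw [le_div_iff₀ hgpos] at htc'
            have hrne : r i ≠ 0 := by
              intro h; rw [h] at hri; simp at hri; linarith
            rcases lt_or_gt_of_ne hrne with h | h
            · rw [Real.sign_of_neg h] at hkey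
              rw [abs_of_neg h] at hri
              rw [abs_le]
              constructor <;> nlinarith
            · rw [Real.sign_of_pos h] at hkey
              rw [abs_of_pos h] at hri
              rw [abs_le]
              constructor <;> nlinarith
          · have htc' := htc i
            simp only [hc, if_neg hri] at htc'
            have hgpos : (0:ℝ) < 1 + |g i| := by positivity
            rw [le_div_iff₀ hgpos] at htc'
            calc |r i + t * g i| ≤ |r i| + |t * g i| := abs_add_le _ _
              _ = |r i| + t * |g i| := by rw [abs_mul, abs_of_nonneg ht0]
              _ ≤ δhat - t := by nlinarith
        · simp only [if_neg hy]
          rcases lt_or_gt_of_ne hy with h | h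
          · rw [Real.sign_of_neg h]; norm_num
          · rw [Real.sign_of_pos h]; norm_num
      · intro i hy
        simp only [if_neg hy]
      · funext i
        have hAval : (A.mulVec (xhat + t • d) - b) i = r i + t * g i := by
          simp only [Matrix.mulVec_add, Matrix.mulVec_smul, hr, hg, Pi.sub_apply,
            Pi.add_apply, Pi.smul_apply, smul_eq_mul]
          ring
        rw [Pi.smul_apply, hAval]
        by_cases hy : yhat i = 0
        · simp only [if_pos hy, smul_eq_mul]
          field_simp
        · simp only [if_neg hy, smul_eq_mul]
          have hg1 : g i = -Real.sign (yhat i) := hd1 i hy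
          have hξ2' := hξ2 i hy
          rw [hre i, hξ2', hg1]
          ring
end

section
/- Given δ̂ > δ ≥ 0 and an optimal pair (x̂, ŷ) for (P_{δ̂}), if (x, t) is feasible for the primal update LP with t > 0 (i.e., A^{I_D}x − b_{I_D} = (δ̂ − t)sign(ŷ_{I_D}), (t − δ̂)𝟙 ≤ A^{I_D^c}x − b_{I_D^c} ≤ (δ̂ − t)𝟙, (Aᵀŷ) ⊙ x ≤ 0, x_{J_D^c} = 0, t ≤ δ̂ − δ), then (x, ŷ) is an optimal pair for (P_{δ̂ − t}). -/
open Finset Pointwise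

lemma abs_sign_le' (y : ℝ) : |Real.sign y| ≤ 1 := by
  rcases lt_trichotomy y 0 with h|h|h <;>
    simp [Real.sign_of_neg, Real.sign_of_pos, h, Real.sign_zero]

theorem primal_update_feasible_gives_optimal_pair {m n : ℕ}
    (A : Matrix (Fin m) (Fin n) ℝ) (b : Fin m → ℝ) (δ δhat : ℝ)
    (hδ0 : 0 ≤ δ) (hδ : δ < δhat) (hδb : δhat < linf b)
    (xhat : Fin n → ℝ) (yhat : Fin m → ℝ) (hopt : DualCert A b δhat xhat yhat)
    (x : Fin n → ℝ) (t : ℝ) (ht : 0 < t)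
    (h1 : ∀ i, yhat i ≠ 0 → A.mulVec x i - b i = (δhat - t) * Real.sign (yhat i))
    (h2 : ∀ i, yhat i = 0 →
      t - δhat ≤ A.mulVec x i - b i ∧ A.mulVec x i - b i ≤ δhat - t)
    (h3 : ∀ j, (∑ i, A i j * yhat i) * x j ≤ 0)
    (h4 : ∀ j, |∑ i, A i j * yhat i| ≠ 1 → x j = 0)
    (h5 : t ≤ δhat - δ) :
    DualCert A b (δhat - t) x yhat := by
  obtain ⟨⟨hb1, hb2⟩, _⟩ := hopt
  have hAty : ∀ j, (A.transpose.mulVec yhat) j = ∑ i, A i j * yhat i := by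
    intro j
    simp [Matrix.mulVec, Matrix.transpose_apply, dotProduct]
  constructor
  · refine ⟨hb1, ?_⟩
    intro j hxj
    have hs : |∑ i, A i j * yhat i| = 1 := by
      by_contra h; exact hxj (h4 j h)
    have h3j := h3 j
    have hcases : (∑ i, A i j * yhat i) = 1 ∨ (∑ i, A i j * yhat i) = -1 :=
      (abs_eq (by norm_num)).mp hs
    rw [Pi.neg_apply, hAty]
    rcases lt_trichotomy (x j) 0 with h | h | h
    · rw [Real.sign_of_neg h]
      rcases hcases with h1' | h1'
      · linarith
      · nlinarith
    · exact absurd h hxj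
    · rw [Real.sign_of_pos h]
      rcases hcases with h1' | h1'
      · nlinarith
      · linarith
  · have hc0 : 0 ≤ δhat - t := by linarith
    rcases eq_or_lt_of_le hc0 with hc' | hc'
    · refine Set.mem_smul_set.mpr ⟨fun i => Real.sign (yhat i),
        ⟨fun i => abs_sign_le' _, fun i _ => rfl⟩, ?_⟩
      funext i
      show (δhat - t) * Real.sign (yhat i) = A.mulVec x i - b i
      by_cases hy : yhat i = 0
      · have h2a := (h2 i hy).1
        have h2b := (h2 i hy).2
        rw [← hc', zero_mul]
        linarith
      · rw [(h1 i hy)]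
    · refine Set.mem_smul_set.mpr
        ⟨fun i => (A.mulVec x i - b i) / (δhat - t), ⟨?_, ?_⟩, ?_⟩
      · intro i
        show |(A.mulVec x i - b i) / (δhat - t)| ≤ 1
        by_cases hy : yhat i = 0
        · have h2a := (h2 i hy).1
          have h2b := (h2 i hy).2
          rw [abs_le]
          constructor
          · rw [le_div_iff₀ hc']; linarith
          · rw [div_le_one hc']; linarith
        · rw [(h1 i hy), mul_comm, mul_div_assoc, div_self (ne_of_gt hc'), mul_one]
          exact abs_sign_le' _
      · intro i hy
        show (A.mulVec x i - b i) / (δhat - t) = Real.sign (yhat i)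
        rw [(h1 i hy), mul_comm, mul_div_assoc, div_self (ne_of_gt hc'), mul_one]
      · funext i
        show (δhat - t) * ((A.mulVec x i - b i) / (δhat - t)) = A.mulVec x i - b i
        field_simp
end

section
/- Let x̄ be optimal for min ‖x‖₁ s.t. Ax = Ax̄ with dual certificate ȳ (−Aᵀȳ ∈ Sign(x̄)), and set b̂ := Ax̄ − δ·sign(ȳ). Then x̄ is an optimal solution of min ‖x‖₁ s.t. ‖Ax − b̂‖_∞ ≤ δ. -/
open Finset Pointwise

lemma mul_sign_self (x : ℝ) : x * Real.sign x = |x| := by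
  rcases lt_trichotomy x 0 with h|h|h
  · rw [Real.sign_of_neg h, abs_of_neg h]; ring
  · simp [h]
  · rw [Real.sign_of_pos h, abs_of_pos h]; ring

lemma abs_sign_le_one (x : ℝ) : |Real.sign x| ≤ 1 := by
  rcases lt_trichotomy x 0 with h|h|h
  · rw [Real.sign_of_neg h]; norm_num
  · simp [h]
  · rw [Real.sign_of_pos h]; norm_num

theorem construct_Pdelta_solution {m n : ℕ} (A : Matrix (Fin m) (Fin n) ℝ)
    (xbar : Fin n → ℝ) (ybar : Fin m → ℝ) (δ : ℝ) (hδ : 0 < δ)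
    (hBP : ∀ z : Fin n → ℝ, A.mulVec z = A.mulVec xbar → l1 xbar ≤ l1 z)
    (hcert : -(A.transpose.mulVec ybar) ∈ SignSet xbar) :
    IsOpt A (A.mulVec xbar - δ • (fun i => Real.sign (ybar i))) δ xbar := by
  obtain ⟨hbd, hsgn⟩ := hcert
  set ξ : Fin n → ℝ := -(A.transpose.mulVec ybar) with hξ
  set b : Fin m → ℝ := A.mulVec xbar - δ • (fun i => Real.sign (ybar i)) with hb
  -- swap lemma
  have swap : ∀ v : Fin n → ℝ,
      ∑ j, ξ j * v j = -∑ i, ybar i * (A.mulVec v) i := by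
    intro v
    have : ∑ j, (A.transpose.mulVec ybar) j * v j = ∑ i, ybar i * (A.mulVec v) i := by
      simp only [Matrix.mulVec, dotProduct, Matrix.transpose_apply,
        Finset.sum_mul, Finset.mul_sum]
      rw [Finset.sum_comm]
      apply Finset.sum_congr rfl; intro i _
      apply Finset.sum_congr rfl; intro j _
      ring
    rw [← this, ← Finset.sum_neg_distrib]
    apply Finset.sum_congr rfl; intro j _
    simp [hξ]
  constructor
  · -- feasibility
    unfold Feas linf
    have hw : A.mulVec xbar - b = δ • (fun i => Real.sign (ybar i)) := by
      rw [hb]; abel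
    rw [hw]
    apply Real.iSup_le _ hδ.le
    intro i
    simp only [Pi.smul_apply, smul_eq_mul, abs_mul, abs_of_pos hδ]
    calc δ * |Real.sign (ybar i)| ≤ δ * 1 := by
          exact mul_le_mul_of_nonneg_left (abs_sign_le_one _) hδ.le
      _ = δ := mul_one δ
  · intro z hz
    -- pointwise bound from feasibility of z
    have hzi : ∀ i, |(A.mulVec z - b) i| ≤ δ := by
      intro i
      refine le_trans ?_ hz
      exact le_ciSup (f := fun i => |(A.mulVec z - b) i|) (Set.Finite.bddAbove (Set.finite_range _)) i
    have h1 : l1 xbar = ∑ j, ξ j * xbar j := by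
      unfold l1
      apply Finset.sum_congr rfl; intro j _
      by_cases h : xbar j = 0
      · simp [h]
      · rw [hsgn j h, mul_comm, mul_sign_self]
    have h2 : ∑ j, ξ j * z j ≤ l1 z := by
      unfold l1
      apply Finset.sum_le_sum; intro j _
      calc ξ j * z j ≤ |ξ j * z j| := le_abs_self _
        _ = |ξ j| * |z j| := abs_mul _ _
        _ ≤ 1 * |z j| := mul_le_mul_of_nonneg_right (hbd j) (abs_nonneg _)
        _ = |z j| := one_mul _
    have h3 := swap z
    have h4 := swap xbar
    -- expand A.mulVec z as (A.mulVec z - b) + b pointwise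
    have h5 : ∑ i, ybar i * (A.mulVec z) i
        = ∑ i, ybar i * (A.mulVec z - b) i + ∑ i, ybar i * (A.mulVec xbar) i
          - δ * ∑ i, |ybar i| := by
      simp only [Finset.mul_sum]
      rw [← Finset.sum_add_distrib, ← Finset.sum_sub_distrib]
      apply Finset.sum_congr rfl; intro i _
      have : (A.mulVec z - b) i = A.mulVec z i - (A.mulVec xbar i - δ * Real.sign (ybar i)) := by
        simp [hb]
      rw [this, ← mul_sign_self (ybar i)]
      ring
    have h6 : ∑ i, ybar i * (A.mulVec z - b) i ≤ δ * ∑ i, |ybar i| := by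
      rw [Finset.mul_sum]
      apply Finset.sum_le_sum; intro i _
      calc ybar i * (A.mulVec z - b) i ≤ |ybar i * (A.mulVec z - b) i| := le_abs_self _
        _ = |ybar i| * |(A.mulVec z - b) i| := abs_mul _ _
        _ ≤ |ybar i| * δ := mul_le_mul_of_nonneg_left (hzi i) (abs_nonneg _)
        _ = δ * |ybar i| := mul_comm _ _
    linarith
end

section
/- In the active-set LP method, if the current feasible point x^ℓ has multiplier μ_i < 0 for some active constraint i, and after removing i from the active set a direction ξ is found solving A_𝒮ξ_𝒮 = 0, D_𝒮^𝒜ξ_𝒮 = 0, c_𝒮ᵀξ_𝒮 = −1, ξ_{𝒮^c} = 0, then d_iᵀξ = −1/μ_i > 0; in particular, for α > 0 the step x^ℓ + αξ strictly deactivates constraint i (d_iᵀ(x^ℓ + αξ) > e_i). -/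
open Finset Pointwise

theorem removed_constraint_deactivates {m n k : ℕ} (c : Fin n → ℝ)
    (A : Matrix (Fin m) (Fin n) ℝ) (D : Matrix (Fin k) (Fin n) ℝ) (e : Fin k → ℝ)
    (S : Set (Fin n)) (Aset : Set (Fin k)) (i : Fin k) (hi : i ∉ Aset)
    (x ξ : Fin n → ℝ) (lam : Fin m → ℝ) (μ : Fin k → ℝ)
    (hsupp : ∀ j, j ∉ S → ξ j = 0)
    (hAξ : A.mulVec ξ = 0)
    (hDξ : ∀ i' ∈ Aset, D.mulVec ξ i' = 0)
    (hcξ : (∑ j, c j * ξ j) = -1)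
    (hμsupp : ∀ i', i' ∉ Aset → i' ≠ i → μ i' = 0)
    (hKKT : ∀ j ∈ S, (∑ i', A i' j * lam i') + (∑ i', D i' j * μ i') = c j)
    (hμi : μ i < 0)
    (hact : D.mulVec x i = e i) :
    D.mulVec ξ i = -(1 / μ i) ∧
      ∀ a : ℝ, 0 < a → e i < D.mulVec (x + a • ξ) i := by
  have hμne : μ i ≠ 0 := ne_of_lt hμi
  have key : μ i * D.mulVec ξ i = -1 := by
    have h1 : ∀ j, c j * ξ j =
        (∑ i', A i' j * lam i') * ξ j + (∑ i', D i' j * μ i') * ξ j := by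
      intro j
      by_cases hj : j ∈ S
      · rw [← add_mul, hKKT j hj]
      · simp [hsupp j hj]
    have hA0 : ∑ i', lam i' * A.mulVec ξ i' = 0 := by simp [hAξ]
    calc μ i * D.mulVec ξ i
        = ∑ i', μ i' * D.mulVec ξ i' := by
          rw [Finset.sum_eq_single i]
          · intro i' _ hne
            by_cases h : i' ∈ Aset
            · simp [hDξ i' h]
            · simp [hμsupp i' h hne]
          · simp
      _ = ∑ i', lam i' * A.mulVec ξ i' + ∑ i', μ i' * D.mulVec ξ i' := by
          rw [hA0, zero_add]
      _ = ∑ j, c j * ξ j := by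
          simp only [h1, Finset.sum_add_distrib, Matrix.mulVec, dotProduct,
            Finset.mul_sum, Finset.sum_mul]
          congr 1
          · rw [Finset.sum_comm]
            apply Finset.sum_congr rfl; intros
            apply Finset.sum_congr rfl; intros; ring
          · rw [Finset.sum_comm]
            apply Finset.sum_congr rfl; intros
            apply Finset.sum_congr rfl; intros; ring
      _ = -1 := hcξ
  have hDi : D.mulVec ξ i = -(1 / μ i) := by
    field_simp
    linarith [key]
  refine ⟨hDi, fun a ha => ?_⟩
  have hpos : 0 < D.mulVec ξ i := by
    rw [hDi]
    have : 1 / μ i < 0 := div_neg_of_pos_of_neg one_pos hμi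
    linarith
  have : D.mulVec (x + a • ξ) i = e i + a * D.mulVec ξ i := by
    rw [Matrix.mulVec_add, ← hact]
    simp [Matrix.mulVec_smul]
  rw [this]
  nlinarith
end

section
/- If the LP min cᵀx s.t. Ax = b, Dx ≥ e, diag(σ)x ≥ 0 is bounded and x^ℓ is feasible with direction ξ satisfying Aξ = 0, D^𝒜ξ = 0, cᵀξ = −1, ξ_{𝒮^c} = 0, then the step size α = min( min_{i∈𝒜^c, d_iᵀξ<0} (e_i − d_iᵀx^ℓ)/(d_iᵀξ), min_{j∈𝒮, σ_jξ_j<0} −x^ℓ_j/ξ_j ) is finite and positive, and x^ℓ + αξ is feasible with strictly smaller objective value. -/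
open Finset Pointwise

open Classical in
noncomputable def stepSet {n k : ℕ} (D : Matrix (Fin k) (Fin n) ℝ) (e : Fin k → ℝ)
    (σ : Fin n → ℝ) (x ξ : Fin n → ℝ) : Finset ℝ :=
  ((Finset.univ.filter (fun i : Fin k => e i < D.mulVec x i ∧ D.mulVec ξ i < 0)).image
      (fun i => (e i - D.mulVec x i) / D.mulVec ξ i)) ∪
    ((Finset.univ.filter (fun j : Fin n => x j ≠ 0 ∧ σ j * ξ j < 0)).image
      (fun j => -(x j) / ξ j))

/-! Moving from `x` along `ξ` leaves `Ax = b` and the active rows of `Dx ≥ e` untouched and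
decreases the objective at unit rate. Every remaining constraint has the form `0 ≤ a + t d` with
slack `a ≥ 0`, and it can only be violated when `d < 0`, at `t > -a / d`; these ratios form
`stepSet`, so stepping by its minimum keeps `x` feasible. Each ratio is positive because its
constraint is strictly inactive. If there were no ratio at all, the whole ray `x + tξ` would be
feasible with objective `cᵀx - t`, contradicting boundedness. -/

open Matrix

def LPFeasible {m n k : ℕ} (A : Matrix (Fin m) (Fin n) ℝ) (b : Fin m → ℝ)
    (D : Matrix (Fin k) (Fin n) ℝ) (e : Fin k → ℝ) (σ : Fin n → ℝ) (z : Fin n → ℝ) : Prop :=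
  A *ᵥ z = b ∧ (∀ i, e i ≤ (D *ᵥ z) i) ∧ ∀ j, 0 ≤ σ j * z j

theorem add_mul_nonneg_of_le_neg_div {K : Type*} [Field K] [LinearOrder K] [IsStrictOrderedRing K]
    {a d t : K} (ha : 0 ≤ a) (ht : 0 ≤ t) (h : d < 0 → t ≤ -a / d) : 0 ≤ a + t * d := by
  rcases le_or_gt 0 d with hd | hd
  · exact add_nonneg ha (mul_nonneg ht hd)
  · linarith [(le_div_iff_of_neg hd).1 (h hd)]

theorem neg_div_eq_neg_mul_div_mul {K : Type*} [Field K] {s y z : K} (hs : s ≠ 0) :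
    -y / z = -(s * y) / (s * z) := by
  rw [← mul_neg, mul_div_mul_left _ _ hs]

theorem dotProduct_add_smul_of_dotProduct_eq_neg_one {ι R : Type*} [Fintype ι] [CommRing R]
    {c ξ : ι → R} (hcξ : c ⬝ᵥ ξ = -1) (x : ι → R) (t : R) :
    c ⬝ᵥ (x + t • ξ) = c ⬝ᵥ x - t := by
  rw [dotProduct_add, dotProduct_smul, hcξ, smul_eq_mul, mul_neg_one, sub_eq_add_neg]

section StepSet

variable {m n k : ℕ} {A : Matrix (Fin m) (Fin n) ℝ} {b : Fin m → ℝ}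
  {D : Matrix (Fin k) (Fin n) ℝ} {e : Fin k → ℝ} {σ : Fin n → ℝ} {x ξ : Fin n → ℝ}

theorem mem_stepSet_of_row {i : Fin k} (hslack : e i < (D *ᵥ x) i) (hdesc : (D *ᵥ ξ) i < 0) :
    (e i - (D *ᵥ x) i) / (D *ᵥ ξ) i ∈ stepSet D e σ x ξ := by
  unfold stepSet
  exact mem_union_left _ (mem_image_of_mem _ (by simp [hslack, hdesc]))

theorem mem_stepSet_of_coord {j : Fin n} (hx : x j ≠ 0) (hdesc : σ j * ξ j < 0) :
    -x j / ξ j ∈ stepSet D e σ x ξ := by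
  unfold stepSet
  exact mem_union_right _ (mem_image_of_mem _ (by simp [hx, hdesc]))

theorem pos_of_mem_stepSet (hxσ : ∀ j, 0 ≤ σ j * x j) {y : ℝ} (hy : y ∈ stepSet D e σ x ξ) :
    0 < y := by
  simp only [stepSet, mem_union, mem_image, mem_filter, mem_univ, true_and] at hy
  rcases hy with ⟨i, ⟨hslack, hdesc⟩, rfl⟩ | ⟨j, ⟨hx, hdesc⟩, rfl⟩
  · exact div_pos_of_neg_of_neg (sub_neg.2 hslack) hdesc
  · have hσ : σ j ≠ 0 := left_ne_zero_of_mul hdesc.ne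
    have hσx : 0 < σ j * x j := (hxσ j).lt_of_ne (mul_ne_zero hσ hx).symm
    rw [neg_div_eq_neg_mul_div_mul hσ]
    exact div_pos_of_neg_of_neg (neg_neg_of_pos hσx) hdesc

theorem LPFeasible.add_smul (hx : LPFeasible A b D e σ x) (hAξ : A *ᵥ ξ = 0)
    (hDξ : ∀ i, (D *ᵥ x) i = e i → (D *ᵥ ξ) i = 0) (hξsupp : ∀ j, x j = 0 → ξ j = 0)
    {t : ℝ} (ht : 0 ≤ t) (hle : ∀ y ∈ stepSet D e σ x ξ, t ≤ y) :
    LPFeasible A b D e σ (x + t • ξ) := by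
  obtain ⟨hxA, hxD, hxσ⟩ := hx
  refine ⟨by rw [mulVec_add, mulVec_smul, hAξ, smul_zero, add_zero, hxA], fun i => ?_, fun j => ?_⟩
  · have hratio : (D *ᵥ ξ) i < 0 → t ≤ -((D *ᵥ x) i - e i) / (D *ᵥ ξ) i := fun hdesc => by
      have hslack : e i < (D *ᵥ x) i := (hxD i).lt_of_ne fun h => hdesc.ne (hDξ i h.symm)
      simpa only [neg_sub] using hle _ (mem_stepSet_of_row hslack hdesc)
    have hrow := add_mul_nonneg_of_le_neg_div (sub_nonneg.2 (hxD i)) ht hratio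
    simp only [mulVec_add, mulVec_smul, Pi.add_apply, Pi.smul_apply, smul_eq_mul]
    linarith
  · have hratio : σ j * ξ j < 0 → t ≤ -(σ j * x j) / (σ j * ξ j) := fun hdesc => by
      have hx : x j ≠ 0 := fun h => hdesc.ne (by rw [hξsupp j h, mul_zero])
      rw [← neg_div_eq_neg_mul_div_mul (left_ne_zero_of_mul hdesc.ne)]
      exact hle _ (mem_stepSet_of_coord hx hdesc)
    have hcoord := add_mul_nonneg_of_le_neg_div (hxσ j) ht hratio
    simp only [Pi.add_apply, Pi.smul_apply, smul_eq_mul]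
    linarith

theorem stepSet_nonempty {c : Fin n → ℝ} (hbdd : ∃ L : ℝ, ∀ z, LPFeasible A b D e σ z → L ≤ c ⬝ᵥ z)
    (hx : LPFeasible A b D e σ x) (hAξ : A *ᵥ ξ = 0)
    (hDξ : ∀ i, (D *ᵥ x) i = e i → (D *ᵥ ξ) i = 0) (hcξ : c ⬝ᵥ ξ = -1)
    (hξsupp : ∀ j, x j = 0 → ξ j = 0) : (stepSet D e σ x ξ).Nonempty := by
  by_contra hempty
  rw [not_nonempty_iff_eq_empty] at hempty
  obtain ⟨L, hL⟩ := hbdd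
  have hLx := hL x hx
  have hray := hL _ (hx.add_smul hAξ hDξ hξsupp (t := c ⬝ᵥ x - L + 1) (by linarith)
    (by simp [hempty]))
  rw [dotProduct_add_smul_of_dotProduct_eq_neg_one hcξ] at hray
  linarith

end StepSet

theorem step_size_positive_and_feasible_general {m n k : ℕ} (c : Fin n → ℝ)
    (A : Matrix (Fin m) (Fin n) ℝ) (b : Fin m → ℝ) (D : Matrix (Fin k) (Fin n) ℝ)
    (e : Fin k → ℝ) (σ : Fin n → ℝ)
    (hbdd : ∃ L : ℝ, ∀ z : Fin n → ℝ,
      (A.mulVec z = b ∧ (∀ i, e i ≤ D.mulVec z i) ∧ ∀ j, 0 ≤ σ j * z j) →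
      L ≤ ∑ j, c j * z j)
    (x ξ : Fin n → ℝ)
    (hxA : A.mulVec x = b) (hxD : ∀ i, e i ≤ D.mulVec x i)
    (hxσ : ∀ j, 0 ≤ σ j * x j)
    (hAξ : A.mulVec ξ = 0)
    (hDξ : ∀ i, D.mulVec x i = e i → D.mulVec ξ i = 0)
    (hcξ : (∑ j, c j * ξ j) = -1)
    (hξsupp : ∀ j, x j = 0 → ξ j = 0) :
    ∃ hT : (stepSet D e σ x ξ).Nonempty,
      0 < (stepSet D e σ x ξ).min' hT ∧
      (A.mulVec (x + (stepSet D e σ x ξ).min' hT • ξ) = b ∧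
        (∀ i, e i ≤ D.mulVec (x + (stepSet D e σ x ξ).min' hT • ξ) i) ∧
        ∀ j, 0 ≤ σ j * (x + (stepSet D e σ x ξ).min' hT • ξ) j) ∧
      (∑ j, c j * (x + (stepSet D e σ x ξ).min' hT • ξ) j) < ∑ j, c j * x j := by
  have hx : LPFeasible A b D e σ x := ⟨hxA, hxD, hxσ⟩
  have hT := stepSet_nonempty hbdd hx hAξ hDξ hcξ hξsupp
  have hpos : 0 < (stepSet D e σ x ξ).min' hT :=
    (lt_min'_iff _ hT).2 fun _ hy => pos_of_mem_stepSet hxσ hy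
  refine ⟨hT, hpos, hx.add_smul hAξ hDξ hξsupp hpos.le fun y hy => min'_le _ y hy, ?_⟩
  change c ⬝ᵥ _ < c ⬝ᵥ x
  rw [dotProduct_add_smul_of_dotProduct_eq_neg_one hcξ]
  linarith

theorem step_size_positive_and_feasible {m n k : ℕ} (c : Fin n → ℝ)
    (A : Matrix (Fin m) (Fin n) ℝ) (b : Fin m → ℝ) (D : Matrix (Fin k) (Fin n) ℝ)
    (e : Fin k → ℝ) (σ : Fin n → ℝ) (hσ : ∀ j, σ j = 1 ∨ σ j = -1)
    (hbdd : ∃ L : ℝ, ∀ z : Fin n → ℝ,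
      (A.mulVec z = b ∧ (∀ i, e i ≤ D.mulVec z i) ∧ ∀ j, 0 ≤ σ j * z j) →
      L ≤ ∑ j, c j * z j)
    (x ξ : Fin n → ℝ)
    (hxA : A.mulVec x = b) (hxD : ∀ i, e i ≤ D.mulVec x i)
    (hxσ : ∀ j, 0 ≤ σ j * x j)
    (hAξ : A.mulVec ξ = 0)
    (hDξ : ∀ i, D.mulVec x i = e i → D.mulVec ξ i = 0)
    (hcξ : (∑ j, c j * ξ j) = -1)
    (hξsupp : ∀ j, x j = 0 → ξ j = 0) :
    ∃ hT : (stepSet D e σ x ξ).Nonempty,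
      0 < (stepSet D e σ x ξ).min' hT ∧
      (A.mulVec (x + (stepSet D e σ x ξ).min' hT • ξ) = b ∧
        (∀ i, e i ≤ D.mulVec (x + (stepSet D e σ x ξ).min' hT • ξ) i) ∧
        ∀ j, 0 ≤ σ j * (x + (stepSet D e σ x ξ).min' hT • ξ) j) ∧
      (∑ j, c j * (x + (stepSet D e σ x ξ).min' hT • ξ) j) < ∑ j, c j * x j :=
  step_size_positive_and_feasible_general c A b D e σ hbdd x ξ hxA hxD hxσ hAξ hDξ hcξ hξsupp
end

section
/- If (x̂, ŷ) is an optimal pair for (P_{δ̂}) with 0 ≤ δ̂ < ‖b‖_∞, then ŷ ≠ 0. -/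
open Finset Pointwise

theorem dual_certificate_nonzero {m n : ℕ} (A : Matrix (Fin m) (Fin n) ℝ)
    (b : Fin m → ℝ) (δhat : ℝ) (hδ0 : 0 ≤ δhat) (hδ : δhat < linf b)
    (xhat : Fin n → ℝ) (yhat : Fin m → ℝ) (h : DualCert A b δhat xhat yhat) :
    yhat ≠ 0 := by
  intro hy0
  subst hy0
  obtain ⟨h1, h2⟩ := h
  -- x̂ = 0
  have hAy : A.transpose.mulVec (0 : Fin m → ℝ) = 0 := by
    simp [Matrix.mulVec_zero]
  have hx : xhat = 0 := by
    funext j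
    by_contra hj
    have := h1.2 j hj
    rw [hAy] at this
    simp at this
    rcases lt_trichotomy (xhat j) 0 with hlt | heq | hgt
    · rw [Real.sign_of_neg hlt] at this; norm_num at this
    · exact hj heq
    · rw [Real.sign_of_pos hgt] at this; norm_num at this
  subst hx
  obtain ⟨ξ, hξ, hξeq⟩ := h2
  have hbi : ∀ i, |b i| ≤ δhat := by
    intro i
    have : A.mulVec 0 - b = δhat • ξ := hξeq.symm
    have hbi : b i = -(δhat * ξ i) := by
      have := congrFun this i
      simp [Matrix.mulVec_zero] at this
      linarith [this]
    rw [hbi, abs_neg, abs_mul, abs_of_nonneg hδ0]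
    calc δhat * |ξ i| ≤ δhat * 1 := by
          exact mul_le_mul_of_nonneg_left (hξ.1 i) hδ0
      _ = δhat := mul_one _
  have hlinf : linf b ≤ δhat := by
    rcases Nat.eq_zero_or_pos m with hm | hm
    · subst hm
      have : linf b = 0 := by
        simp [linf, ciSup_of_empty]
      linarith
    · have : Nonempty (Fin m) := ⟨⟨0, hm⟩⟩
      exact ciSup_le hbi
  linarith
end
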